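/- Let P ∈ ℝ^{n×n} be symmetric positive definite and λ ∈ [0, 1) be such that A_K(𝒥)^⊤ P A_K(𝒥) ⪯ λ P for every subset 𝒥 ⊆ {1, …, m}. Let (e_i)_{i≥0} be a sequence of square-integrable random vectors in ℝ^n satisfying e_{i+1} = f(e_i, v_i) + w_i, where each v_i is a (possibly random) vector with ‖v_i‖_∞ ≤ 1 almost surely, and each w_i is a square-integrable random vector that is independent of e_i (and of v_i), with E[w_i] = 0 and E[w_i w_i^⊤] = W. Then for all i: E[e_{i+1}^⊤ P e_{i+1}] ≤ λ · E[e_i^⊤ P e_i] + Tr(PW). Moreover, if e_0 = 0 almost surely, then E[e_i^⊤ P e_i] ≤ ((1 − λ^i)/(1 − λ)) · Tr(PW) for all i ≥ 0. -/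

import Mathlib

/-!
On the box `|v_j| ≤ 1` each saturated coordinate satisfies `sat (z + v) - v = θ z` with
`θ ∈ [0, 1]`, so `f(e, v) = (A + B diag(θ) K) e` for a point `θ` of the unit cube, and this is
affine in `θ`. The quadratic form `θ ↦ (A_K(θ) e)ᵀ P (A_K(θ) e)` is therefore convex, hence
bounded on the cube by its values at the vertices `θ = 1_𝒥`, where the LMIs give `λ eᵀ P e`.
In expectation the noise is independent of `f(e_i, v_i)` and centred, so the cross terms vanish
and it adds exactly `Tr(P W)`; iterating the resulting affine recursion from `0` gives the
geometric bound.
-/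

open Matrix MeasureTheory ProbabilityTheory

/-- The scalar saturation function `sat(x) = sign(x) · min(|x|, 1)`. -/
noncomputable def sat (x : ℝ) : ℝ := Real.sign x * min |x| 1

/-- The componentwise saturation function `φ : ℝ^m → ℝ^m`. -/
noncomputable def satVec {m : ℕ} (u : Fin m → ℝ) : Fin m → ℝ := fun j => sat (u j)

/-- The saturated error dynamics `f(e, v) = A e + B (φ(K e + v) − v)`. -/
noncomputable def errDyn {n m : ℕ} (A : Matrix (Fin n) (Fin n) ℝ)
    (B : Matrix (Fin n) (Fin m) ℝ) (K : Matrix (Fin m) (Fin n) ℝ)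
    (e : Fin n → ℝ) (v : Fin m → ℝ) : Fin n → ℝ :=
  A.mulVec e + B.mulVec (satVec (K.mulVec e + v) - v)

/-- `A_K(𝒥) = A + Σ_{j ∈ 𝒥} B_{(j)} K_j`. -/
noncomputable def AK {n m : ℕ} (A : Matrix (Fin n) (Fin n) ℝ)
    (B : Matrix (Fin n) (Fin m) ℝ) (K : Matrix (Fin m) (Fin n) ℝ)
    (J : Finset (Fin m)) : Matrix (Fin n) (Fin n) ℝ :=
  A + ∑ j ∈ J, Matrix.vecMulVec (fun i => B i j) (K j)

open Set

lemma sat_eq_max_min (x : ℝ) : sat x = max (-1) (min x 1) := by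
  unfold sat
  rcases lt_trichotomy x 0 with hx | rfl | hx
  · rw [Real.sign_of_neg hx, abs_of_neg hx]
    rcases le_total (-1) x with h | h
    · rw [min_eq_left (by linarith), min_eq_left (by linarith), max_eq_right h]; ring
    · rw [min_eq_right (by linarith), min_eq_left (by linarith), max_eq_left h]; ring
  · simp
  · rw [Real.sign_of_pos hx, abs_of_pos hx, one_mul,
      max_eq_right (le_min (by linarith) (by norm_num))]

@[fun_prop]
lemma continuous_sat : Continuous sat := by
  rw [show sat = _ from funext sat_eq_max_min]
  fun_prop

lemma sat_add_sub_mem_uIcc (z : ℝ) {v : ℝ} (hv : |v| ≤ 1) : sat (z + v) - v ∈ uIcc 0 z := by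
  rw [abs_le] at hv
  rw [sat_eq_max_min, mem_uIcc]
  rcases le_total 0 z with hz | hz
  · left
    constructor
    · rw [sub_nonneg, le_max_iff, le_min_iff]; right; constructor <;> linarith
    · rw [sub_le_iff_le_add, max_le_iff, min_le_iff]; constructor <;> [linarith; (left; linarith)]
  · right
    constructor
    · rw [le_sub_iff_add_le, le_max_iff, le_min_iff]; right; constructor <;> linarith
    · rw [sub_nonpos, max_le_iff, min_le_iff]; constructor <;> [linarith; (left; linarith)]

lemma exists_sat_add_sub_eq_mul (z : ℝ) {v : ℝ} (hv : |v| ≤ 1) :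
    ∃ θ ∈ Icc (0 : ℝ) 1, sat (z + v) - v = θ * z := by
  have h := sat_add_sub_mem_uIcc z hv
  rw [← segment_eq_uIcc, segment_eq_image] at h
  obtain ⟨θ, hθ, h⟩ := h
  exact ⟨θ, hθ, by simpa using h.symm⟩

lemma Matrix.PosSemidef.convexOn_dotProduct_mulVec {ι : Type*} [Fintype ι]
    {P : Matrix ι ι ℝ} (hP : P.PosSemidef) : ConvexOn ℝ univ fun x : ι → ℝ => x ⬝ᵥ P *ᵥ x := by
  refine ⟨convex_univ, fun x _ y _ a b ha hb hab => ?_⟩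
  obtain rfl : b = 1 - a := by linarith
  have hxy := hP.dotProduct_mulVec_nonneg (x - y)
  simp only [star_trivial, mulVec_sub, dotProduct_sub, sub_dotProduct] at hxy
  simp only [mulVec_add, mulVec_smul, dotProduct_add, add_dotProduct, dotProduct_smul,
    smul_dotProduct, smul_eq_mul]
  -- the gap is `a (1 - a) (x - y)ᵀ P (x - y)`
  nlinarith [mul_nonneg (mul_nonneg ha hb) hxy]

theorem ConvexOn.le_of_le_on_cube_vertices {ι : Type*} [Finite ι] {f : (ι → ℝ) → ℝ} {c : ℝ}
    (hf : ConvexOn ℝ (univ.pi fun _ => Icc 0 1) f)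
    (hvert : ∀ y ∈ univ.pi fun _ => ({0, 1} : Set ℝ), f y ≤ c)
    {θ : ι → ℝ} (hθ : θ ∈ univ.pi fun _ => Icc (0 : ℝ) 1) : f θ ≤ c := by
  have hhull :
      convexHull ℝ (univ.pi fun _ : ι => ({0, 1} : Set ℝ)) = univ.pi fun _ => Icc 0 1 := by
    simp only [convexHull_pi, convexHull_pair, segment_eq_Icc zero_le_one]
  obtain ⟨y, hy, hθy⟩ := hf.exists_ge_of_mem_convexHull (hhull ▸ subset_convexHull ℝ _)
    (hhull ▸ hθ)
  exact hθy.trans (hvert y hy)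

lemma dotProduct_mulVec_le_of_posSemidef_sub {ι : Type*} [Fintype ι] {P C : Matrix ι ι ℝ}
    {lam : ℝ} (h : (lam • P - Cᵀ * P * C).PosSemidef) (x : ι → ℝ) :
    C *ᵥ x ⬝ᵥ P *ᵥ (C *ᵥ x) ≤ lam * (x ⬝ᵥ P *ᵥ x) := by
  have hx := h.dotProduct_mulVec_nonneg x
  rw [star_trivial, sub_mulVec, dotProduct_sub, smul_mulVec, dotProduct_smul, smul_eq_mul,
    ← mulVec_mulVec, ← mulVec_mulVec, dotProduct_mulVec x Cᵀ, vecMul_transpose] at hx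
  linarith

section ErrorDynamics

variable {n m : ℕ} (A : Matrix (Fin n) (Fin n) ℝ) (B : Matrix (Fin n) (Fin m) ℝ)
  (K : Matrix (Fin m) (Fin n) ℝ)

lemma AK_mulVec (J : Finset (Fin m)) (x : Fin n → ℝ) :
    AK A B K J *ᵥ x = A *ᵥ x + (B * diagonal (K *ᵥ x)) *ᵥ fun j => if j ∈ J then 1 else 0 := by
  rw [AK, add_mulVec, sum_mulVec, ← mulVec_mulVec]
  congr 1
  ext i
  rw [Finset.sum_apply, mulVec, dotProduct]
  simp only [vecMulVec_mulVec, Pi.smul_apply, MulOpposite.smul_eq_mul_unop, MulOpposite.unop_op,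
    mulVec_diagonal, mul_ite, mul_one, mul_zero, Finset.sum_ite_mem, Finset.univ_inter]
  rfl

lemma exists_errDyn_eq (x : Fin n → ℝ) {v : Fin m → ℝ} (hv : ∀ j, |v j| ≤ 1) :
    ∃ θ ∈ univ.pi fun _ => Icc (0 : ℝ) 1,
      errDyn A B K x v = A *ᵥ x + (B * diagonal (K *ᵥ x)) *ᵥ θ := by
  choose θ hθ hsat using fun j => exists_sat_add_sub_eq_mul ((K *ᵥ x) j) (hv j)
  refine ⟨θ, fun j _ => hθ j, ?_⟩
  rw [errDyn, ← mulVec_mulVec]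
  congr 2
  ext j
  simp [satVec, hsat, mulVec_diagonal, mul_comm]

lemma continuous_errDyn :
    Continuous fun p : (Fin n → ℝ) × (Fin m → ℝ) => errDyn A B K p.1 p.2 := by
  unfold errDyn satVec
  fun_prop

lemma errDyn_dotProduct_mulVec_le {P : Matrix (Fin n) (Fin n) ℝ} (hP : P.PosSemidef) {lam : ℝ}
    (hcontr : ∀ J : Finset (Fin m), (lam • P - (AK A B K J)ᵀ * P * AK A B K J).PosSemidef)
    (x : Fin n → ℝ) {v : Fin m → ℝ} (hv : ∀ j, |v j| ≤ 1) :
    errDyn A B K x v ⬝ᵥ P *ᵥ errDyn A B K x v ≤ lam * (x ⬝ᵥ P *ᵥ x) := by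
  obtain ⟨θ, hθ, hdyn⟩ := exists_errDyn_eq A B K x hv
  set C := B * diagonal (K *ᵥ x)
  have hconv : ConvexOn ℝ univ fun θ => (A *ᵥ x + C *ᵥ θ) ⬝ᵥ P *ᵥ (A *ᵥ x + C *ᵥ θ) := by
    have h := (hP.convexOn_dotProduct_mulVec.translate_right (A *ᵥ x)).comp_linearMap (toLin' C)
    rwa [preimage_univ, preimage_univ] at h
  rw [hdyn]
  refine (hconv.subset (subset_univ _) (convex_pi fun _ _ => convex_Icc 0 1))
    |>.le_of_le_on_cube_vertices (fun y hy => ?_) hθ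
  have hyJ : y = fun j => if j ∈ Finset.univ.filter (y · = 1) then 1 else 0 := by
    ext j
    rcases hy j (mem_univ j) with h | h <;> simp_all
  rw [hyJ, ← AK_mulVec]
  exact dotProduct_mulVec_le_of_posSemidef_sub (hcontr _) x

end ErrorDynamics

section SecondMoments

variable {Ω : Type*} [MeasurableSpace Ω] {μ : Measure Ω} {ι : Type*} [Fintype ι]
  {X Y : Ω → ι → ℝ}

lemma dotProduct_mulVec_eq_sum (P : Matrix ι ι ℝ) (x y : ι → ℝ) :
    x ⬝ᵥ P *ᵥ y = ∑ j, ∑ l, P j l * (x j * y l) := by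
  simp only [dotProduct, mulVec, Finset.mul_sum]
  exact Finset.sum_congr rfl fun j _ => Finset.sum_congr rfl fun l _ => by ring

lemma integrable_mul_eval (hX : MemLp X 2 μ) (hY : MemLp Y 2 μ) (j l : ι) :
    Integrable (fun ω => X ω j * Y ω l) μ :=
  (hX.eval j).integrable_mul (hY.eval l)

lemma integrable_dotProduct_mulVec (P : Matrix ι ι ℝ) (hX : MemLp X 2 μ)
    (hY : MemLp Y 2 μ) : Integrable (fun ω => X ω ⬝ᵥ P *ᵥ Y ω) μ := by
  simp only [dotProduct_mulVec_eq_sum]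
  exact integrable_finsetSum _ fun j _ => integrable_finsetSum _ fun l _ =>
    (integrable_mul_eval hX hY j l).const_mul _

lemma integral_dotProduct_mulVec (P : Matrix ι ι ℝ) (hX : MemLp X 2 μ)
    (hY : MemLp Y 2 μ) :
    ∫ ω, X ω ⬝ᵥ P *ᵥ Y ω ∂μ = ∑ j, ∑ l, P j l * ∫ ω, X ω j * Y ω l ∂μ := by
  simp only [dotProduct_mulVec_eq_sum]
  rw [integral_finsetSum _ (f := fun j ω => ∑ l, P j l * (X ω j * Y ω l)) fun j _ =>
    integrable_finsetSum _ fun l _ => (integrable_mul_eval hX hY j l).const_mul _]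
  refine Finset.sum_congr rfl fun j _ => ?_
  rw [integral_finsetSum _ (f := fun l ω => P j l * (X ω j * Y ω l)) fun l _ =>
    (integrable_mul_eval hX hY j l).const_mul _]
  simp only [integral_const_mul]

lemma integral_mul_eval_eq_zero_of_indepFun (hX : MemLp X 2 μ) (hY : MemLp Y 2 μ)
    (hXY : IndepFun X Y μ) (j : ι) {l : ι} (hmean : ∫ ω, Y ω l ∂μ = 0) :
    ∫ ω, X ω j * Y ω l ∂μ = 0 := by
  have hXYjl : IndepFun (fun ω => X ω j) (fun ω => Y ω l) μ :=
    hXY.comp (measurable_pi_apply j) (measurable_pi_apply l)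
  rw [hXYjl.integral_fun_mul_eq_mul_integral (hX.eval j).1 (hY.eval l).1, hmean, mul_zero]

lemma integral_add_dotProduct_mulVec_of_indepFun (P W : Matrix ι ι ℝ)
    (hX : MemLp X 2 μ) (hY : MemLp Y 2 μ) (hXY : IndepFun X Y μ)
    (hmean : ∀ l, ∫ ω, Y ω l ∂μ = 0) (hcov : ∀ j l, ∫ ω, Y ω j * Y ω l ∂μ = W j l) :
    ∫ ω, (X ω + Y ω) ⬝ᵥ P *ᵥ (X ω + Y ω) ∂μ = ∫ ω, X ω ⬝ᵥ P *ᵥ X ω ∂μ + (P * W).trace := by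
  have hexpand : ∀ x y : ι → ℝ, (x + y) ⬝ᵥ P *ᵥ (x + y) =
      x ⬝ᵥ P *ᵥ x + (x ⬝ᵥ P *ᵥ y + (y ⬝ᵥ P *ᵥ x + y ⬝ᵥ P *ᵥ y)) := fun x y => by
    simp only [mulVec_add, dotProduct_add, add_dotProduct]; ring
  have hWsymm : ∀ j l, W l j = W j l := fun j l => by
    simp only [← hcov, mul_comm]
  have iXX := integrable_dotProduct_mulVec P hX hX
  have iXY := integrable_dotProduct_mulVec P hX hY
  have iYX := integrable_dotProduct_mulVec P hY hX
  have iYY := integrable_dotProduct_mulVec P hY hY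
  simp only [hexpand]
  rw [integral_add iXX (by exact iXY.add (iYX.add iYY)), integral_add iXY (by exact iYX.add iYY),
    integral_add iYX iYY, integral_dotProduct_mulVec P hX hY, integral_dotProduct_mulVec P hY hX,
    integral_dotProduct_mulVec P hY hY]
  have hXY0 : ∀ j l, ∫ ω, X ω j * Y ω l ∂μ = 0 := fun j l =>
    integral_mul_eval_eq_zero_of_indepFun hX hY hXY j (hmean l)
  have hYX0 : ∀ j l, ∫ ω, Y ω j * X ω l ∂μ = 0 := fun j l => by
    simp_rw [mul_comm (Y _ j)]
    exact hXY0 l j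
  simp [hXY0, hYX0, hcov, trace, mul_apply, hWsymm]

end SecondMoments

lemma le_geom_sum_mul_of_le_mul_add {a : ℕ → ℝ} {r c : ℝ} (hr : 0 ≤ r) (h0 : a 0 ≤ 0)
    (hstep : ∀ i, a (i + 1) ≤ r * a i + c) : ∀ i, a i ≤ (∑ k ∈ Finset.range i, r ^ k) * c
  | 0 => by simpa using h0
  | i + 1 => by
    rw [geom_sum_succ, add_mul, one_mul, mul_assoc]
    exact (hstep i).trans (by gcongr; exact le_geom_sum_mul_of_le_mul_add hr h0 hstep i)

theorem stmt4_general {n m : ℕ} {Ω : Type*} [MeasurableSpace Ω] (μ : Measure Ω)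
    (A : Matrix (Fin n) (Fin n) ℝ) (B : Matrix (Fin n) (Fin m) ℝ)
    (K : Matrix (Fin m) (Fin n) ℝ) (P W : Matrix (Fin n) (Fin n) ℝ)
    (hP : P.PosDef) (lam : ℝ) (hlam : lam ∈ Set.Ico (0 : ℝ) 1)
    (hcontr : ∀ J : Finset (Fin m),
      (lam • P - (AK A B K J)ᵀ * P * AK A B K J).PosSemidef)
    (e w : ℕ → Ω → Fin n → ℝ) (v : ℕ → Ω → Fin m → ℝ)
    (heL2 : ∀ i, MemLp (e i) 2 μ) (hwL2 : ∀ i, MemLp (w i) 2 μ)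
    (hrec : ∀ i ω, e (i + 1) ω = errDyn A B K (e i ω) (v i ω) + w i ω)
    (hv : ∀ i, ∀ᵐ ω ∂μ, ∀ j, |v i ω j| ≤ 1)
    (hindep : ∀ i, IndepFun (w i) (fun ω => (e i ω, v i ω)) μ)
    (hmean : ∀ i j, ∫ ω, w i ω j ∂μ = 0)
    (hcov : ∀ i j l, ∫ ω, w i ω j * w i ω l ∂μ = W j l) :
    (∀ i, ∫ ω, e (i + 1) ω ⬝ᵥ P.mulVec (e (i + 1) ω) ∂μ ≤
        lam * ∫ ω, e i ω ⬝ᵥ P.mulVec (e i ω) ∂μ + (P * W).trace) ∧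
    ((∀ᵐ ω ∂μ, e 0 ω = 0) →
      ∀ i, ∫ ω, e i ω ⬝ᵥ P.mulVec (e i ω) ∂μ ≤
        (1 - lam ^ i) / (1 - lam) * (P * W).trace) := by
  obtain ⟨hlam0, hlam1⟩ := hlam
  set F : ℕ → Ω → Fin n → ℝ := fun i ω => errDyn A B K (e i ω) (v i ω)
  have hF : ∀ i, MemLp (F i) 2 μ := fun i => by
    have hFew : F i = e (i + 1) - w i := by ext ω : 1; simp [F, hrec]
    exact hFew ▸ (heL2 (i + 1)).sub (hwL2 i)
  have hindepF : ∀ i, IndepFun (F i) (w i) μ := fun i =>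
    (hindep i).symm.comp (continuous_errDyn A B K).measurable measurable_id
  have hstep : ∀ i, ∫ ω, e (i + 1) ω ⬝ᵥ P *ᵥ e (i + 1) ω ∂μ ≤
      lam * ∫ ω, e i ω ⬝ᵥ P *ᵥ e i ω ∂μ + (P * W).trace := fun i => by
    simp only [hrec]
    rw [integral_add_dotProduct_mulVec_of_indepFun P W (hF i) (hwL2 i) (hindepF i) (hmean i)
      (hcov i), ← integral_const_mul]
    gcongr ?_ + _
    refine integral_mono_ae (integrable_dotProduct_mulVec P (hF i) (hF i))
      ((integrable_dotProduct_mulVec P (heL2 i) (heL2 i)).const_mul lam) ?_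
    filter_upwards [hv i] with ω hω
    exact errDyn_dotProduct_mulVec_le A B K hP.posSemidef hcontr (e i ω) hω
  refine ⟨hstep, fun he0 i => ?_⟩
  rw [← neg_div_neg_eq, neg_sub, neg_sub, ← geom_sum_eq hlam1.ne]
  refine le_geom_sum_mul_of_le_mul_add (a := fun i => ∫ ω, e i ω ⬝ᵥ P *ᵥ e i ω ∂μ) hlam0
    (le_of_eq ?_) hstep i
  exact integral_eq_zero_of_ae (by filter_upwards [he0] with ω hω; simp [hω])

/-- Under the contraction LMIs `A_K(𝒥)ᵀ P A_K(𝒥) ⪯ λ P` (for all `𝒥`), the error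
process `e_{i+1} = f(e_i, v_i) + w_i` driven by i.i.d.-type noise `w_i` (zero mean,
covariance `W`, independent of `(e_i, v_i)`), with `‖v_i‖_∞ ≤ 1` a.s., satisfies
`E[e_{i+1}ᵀ P e_{i+1}] ≤ λ E[e_iᵀ P e_i] + Tr(PW)`; and if `e_0 = 0` a.s., then
`E[e_iᵀ P e_i] ≤ ((1 − λ^i)/(1 − λ)) Tr(PW)` for all `i`. -/
theorem stmt4 {n m : ℕ} {Ω : Type*} [MeasurableSpace Ω] (μ : Measure Ω)
    [IsProbabilityMeasure μ]
    (A : Matrix (Fin n) (Fin n) ℝ) (B : Matrix (Fin n) (Fin m) ℝ)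
    (K : Matrix (Fin m) (Fin n) ℝ) (P W : Matrix (Fin n) (Fin n) ℝ)
    (hP : P.PosDef) (lam : ℝ) (hlam : lam ∈ Set.Ico (0 : ℝ) 1)
    (hcontr : ∀ J : Finset (Fin m),
      (lam • P - (AK A B K J)ᵀ * P * AK A B K J).PosSemidef)
    (e w : ℕ → Ω → Fin n → ℝ) (v : ℕ → Ω → Fin m → ℝ)
    (heMeas : ∀ i, Measurable (e i)) (hvMeas : ∀ i, Measurable (v i))
    (hwMeas : ∀ i, Measurable (w i))
    (heL2 : ∀ i, MemLp (e i) 2 μ) (hwL2 : ∀ i, MemLp (w i) 2 μ)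
    (hrec : ∀ i ω, e (i + 1) ω = errDyn A B K (e i ω) (v i ω) + w i ω)
    (hv : ∀ i, ∀ᵐ ω ∂μ, ∀ j, |v i ω j| ≤ 1)
    (hindep : ∀ i, IndepFun (w i) (fun ω => (e i ω, v i ω)) μ)
    (hmean : ∀ i j, ∫ ω, w i ω j ∂μ = 0)
    (hcov : ∀ i j l, ∫ ω, w i ω j * w i ω l ∂μ = W j l) :
    (∀ i, ∫ ω, e (i + 1) ω ⬝ᵥ P.mulVec (e (i + 1) ω) ∂μ ≤
        lam * ∫ ω, e i ω ⬝ᵥ P.mulVec (e i ω) ∂μ + (P * W).trace) ∧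
    ((∀ᵐ ω ∂μ, e 0 ω = 0) →
      ∀ i, ∫ ω, e i ω ⬝ᵥ P.mulVec (e i ω) ∂μ ≤
        (1 - lam ^ i) / (1 - lam) * (P * W).trace) :=
  stmt4_general μ A B K P W hP lam hlam hcontr e w v heL2 hwL2 hrec hv hindep hmean hcov
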